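/- Let f:[0,∞)→ℝ be superquadratic, A an n×n positive semi-definite complex matrix, and x ∈ ℂⁿ a unit vector. Then f(⟨Ax,x⟩) ≤ ⟨f(A)x,x⟩ − ⟨f(|A − ⟨Ax,x⟩I|)x,x⟩, where f is applied via functional calculus and |X| denotes the positive part √(X*X). -/

import Mathlib

open Matrix
open scoped ComplexOrder

/-- A function `f : [0,∞) → ℝ` is superquadratic if for every `t ≥ 0` there is a constant
`C` with `f s ≥ f t + C * (s - t) + f |s - t|` for all `s ≥ 0`. -/
def Superquadratic (f : ℝ → ℝ) : Prop :=
  ∀ t : ℝ, 0 ≤ t → ∃ C : ℝ, ∀ s : ℝ, 0 ≤ s → f t + C * (s - t) + f |s - t| ≤ f s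

/-- Apply a real function to a matrix via the functional calculus (junk value `0` if the
matrix is not Hermitian). -/
noncomputable def mfun {n : ℕ} (f : ℝ → ℝ) (A : Matrix (Fin n) (Fin n) ℂ) :
    Matrix (Fin n) (Fin n) ℂ :=
  if h : A.IsHermitian then h.cfc f else 0

/-- `|A| = √(Aᴴ A)`. -/
noncomputable def matAbs {n : ℕ} (A : Matrix (Fin n) (Fin n) ℂ) : Matrix (Fin n) (Fin n) ℂ :=
  (Matrix.posSemidef_conjTranspose_mul_self A).1.eigenvectorUnitary.1 *
    diagonal ((↑) ∘ Real.sqrt ∘ (Matrix.posSemidef_conjTranspose_mul_self A).1.eigenvalues) *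
    (star (Matrix.posSemidef_conjTranspose_mul_self A).1.eigenvectorUnitary : Matrix (Fin n) (Fin n) ℂ)

/-- Largest eigenvalue of a Hermitian matrix (junk value `0` otherwise). -/
noncomputable def lmax {n : ℕ} (A : Matrix (Fin n) (Fin n) ℂ) : ℝ :=
  if h : A.IsHermitian then ⨆ i, h.eigenvalues i else 0

/-- Smallest eigenvalue of a Hermitian matrix (junk value `0` otherwise). -/
noncomputable def lmin {n : ℕ} (A : Matrix (Fin n) (Fin n) ℂ) : ℝ :=
  if h : A.IsHermitian then ⨅ i, h.eigenvalues i else 0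

/-- `k`-th largest eigenvalue (`k = 0` gives the largest) of a Hermitian matrix
(junk value `0` otherwise). -/
noncomputable def lkth {n : ℕ} (A : Matrix (Fin n) (Fin n) ℂ) (k : Fin n) : ℝ :=
  if h : A.IsHermitian then (h.eigenvalues ∘ Tuple.sort h.eigenvalues) k.rev else 0

/-- The quadratic form `⟨Ax, x⟩` as a complex number. -/
noncomputable def qf {n : ℕ} (A : Matrix (Fin n) (Fin n) ℂ) (x : Fin n → ℂ) : ℂ :=
  star x ⬝ᵥ A *ᵥ x

/-- Löwner order: `A ⊑ B` iff `B - A` is positive semidefinite. -/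
def Loewner {n : ℕ} (A B : Matrix (Fin n) (Fin n) ℂ) : Prop :=
  (B - A).PosSemidef

open Topology

namespace SQ
variable {n : ℕ}
noncomputable def Md (U : unitary (Matrix (Fin n) (Fin n) ℂ)) (d : Fin n → ℝ) :
    Matrix (Fin n) (Fin n) ℂ :=
  (U : Matrix (Fin n) (Fin n) ℂ) * diagonal (RCLike.ofReal ∘ d)
    * star (U : Matrix (Fin n) (Fin n) ℂ)
variable (U : unitary (Matrix (Fin n) (Fin n) ℂ)) (d : Fin n → ℝ)
lemma isHermitian_Md : (Md U d).IsHermitian := by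
  show star (Md U d) = Md U d
  simp only [Md, StarMul.star_mul, star_star, star_eq_conjTranspose (diagonal _),
    diagonal_conjTranspose, mul_assoc]
  congr!
  simp [Pi.star_def, Function.comp_def]
lemma spectrum_Md : spectrum ℝ (Md U d) = Set.range d := by
  ext r
  conv_lhs => rw [Md, Unitary.spectrum_star_right_conjugate,
    ← spectrum.algebraMap_mem_iff ℂ, spectrum_diagonal, RCLike.algebraMap_eq_ofReal]
  simp

lemma mem_spec (i : Fin n) : d i ∈ spectrum ℝ (Md U d) := by
  rw [spectrum_Md]; exact ⟨i, rfl⟩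

@[simps]
noncomputable def auxHom : C(spectrum ℝ (Md U d), ℝ) →⋆ₐ[ℝ] Matrix (Fin n) (Fin n) ℂ where
  toFun := fun g => (U : Matrix (Fin n) (Fin n) ℂ) *
    diagonal (RCLike.ofReal ∘ g ∘ (fun i ↦ ⟨d i, mem_spec U d i⟩))
    * star (U : Matrix (Fin n) (Fin n) ℂ)
  map_one' := by simp [Pi.one_def (M := fun _ : Fin n ↦ ℂ)]
  map_mul' f g := by
    have {a b c d e f : Matrix (Fin n) (Fin n) ℂ} :
        (a * b * c) * (d * e * f) = a * (b * (c * d) * e) * f := by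
      simp only [mul_assoc]
    simp only [this, ContinuousMap.coe_mul, SetLike.coe_mem, Unitary.star_mul_self_of_mem, mul_one,
      diagonal_mul_diagonal, Function.comp_apply]
    congr! with i
    simp
  map_zero' := by simp [Pi.zero_def (M := fun _ : Fin n ↦ ℂ)]
  map_add' f g := by
    simp only [ContinuousMap.coe_add, ← add_mul, ← mul_add, diagonal_add, Function.comp_apply]
    congr! with i
    simp
  commutes' r := by
    simp only [Function.comp_def, algebraMap_apply, smul_eq_mul, mul_one]
    rw [← mul_one (algebraMap _ _ _), ← Unitary.coe_mul_star_self U,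
      ← Algebra.left_comm, Unitary.coe_star, mul_assoc]
    congr!
  map_star' f := by
    simp only [star_trivial, StarMul.star_mul, star_star, star_eq_conjTranspose (diagonal _),
      diagonal_conjTranspose, mul_assoc]
    congr!
    ext
    simp

lemma isClosedEmbedding_auxHom : IsClosedEmbedding (auxHom U d) := by
  have h0 : FiniteDimensional ℝ C(spectrum ℝ (Md U d), ℝ) :=
    FiniteDimensional.of_injective (ContinuousMap.coeFnLinearMap ℝ (M := ℝ)) DFunLike.coe_injective
  refine LinearMap.isClosedEmbedding_of_injective (𝕜 := ℝ) (E := C(spectrum ℝ (Md U d), ℝ))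
    (F := Matrix (Fin n) (Fin n) ℂ) (f := auxHom U d) <| LinearMap.ker_eq_bot'.mpr fun f hf ↦ ?_
  have h2 :
      diagonal (RCLike.ofReal ∘ f ∘ fun i ↦ (⟨d i, mem_spec U d i⟩ : spectrum ℝ (Md U d)))
        = (0 : Matrix (Fin n) (Fin n) ℂ) := by
    have hf' : auxHom U d f = 0 := hf
    rw [auxHom_apply] at hf'
    have h := congrArg
      (fun X => (star (U : Matrix (Fin n) (Fin n) ℂ)) * X * (U : Matrix (Fin n) (Fin n) ℂ)) hf'
    simp only [← mul_assoc, mul_zero, zero_mul] at h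
    rwa [Unitary.star_mul_self_of_mem (SetLike.coe_mem U), one_mul, mul_assoc,
      Unitary.star_mul_self_of_mem (SetLike.coe_mem U), mul_one] at h
  ext x
  simp only [ContinuousMap.zero_apply]
  obtain ⟨x, hx⟩ := x
  obtain ⟨i, rfl⟩ := spectrum_Md U d ▸ hx
  rw [← diagonal_zero] at h2
  have := (diagonal_eq_diagonal_iff).mp h2
  exact RCLike.ofReal_eq_zero.mp (this i)

lemma auxHom_id : auxHom U d (.restrict (spectrum ℝ (Md U d)) (.id ℝ)) = Md U d := by
  conv_rhs => rw [Md]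
  congr!

lemma cfc_Md (f : ℝ → ℝ) : cfc f (Md U d) = Md U (f ∘ d) := by
  have hB : IsSelfAdjoint (Md U d) := isHermitian_Md U d
  have h := cfcHom_eq_of_continuous_of_map_id hB (auxHom U d)
    (isClosedEmbedding_auxHom U d).continuous (auxHom_id U d)
  rw [cfc_apply f (Md U d) hB (by rw [continuousOn_iff_continuous_restrict]; fun_prop), h]
  rw [auxHom_apply]
  simp only [ContinuousMap.coe_mk, Function.comp_def, Set.restrict_apply, Md]
  rfl

end SQ

namespace SQ2
open SQ

variable {n : ℕ} (U : unitary (Matrix (Fin n) (Fin n) ℂ)) (d a b : Fin n → ℝ)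

lemma Md_mul' (a b : Fin n → ℝ) : Md U a * Md U b = Md U (a * b) := by
  have key : ∀ {p q r s t u : Matrix (Fin n) (Fin n) ℂ},
      (p*q*r)*(s*t*u) = p*(q*(r*s)*t)*u := by intros; simp only [mul_assoc]
  simp only [Md, key, Unitary.star_mul_self_of_mem (SetLike.coe_mem U), mul_one,
    diagonal_mul_diagonal]
  congr! with i
  simp

lemma Md_sub : Md U a - Md U b = Md U (a - b) := by
  simp only [Md, ← sub_mul, ← mul_sub]
  congr 2
  ext i j
  simp only [Matrix.sub_apply, Matrix.diagonal_apply, Function.comp_apply]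
  split <;> simp

lemma Md_const (t : ℝ) : Md U (fun _ => t) = (t : ℂ) • 1 := by
  have : diagonal (RCLike.ofReal ∘ (fun _ : Fin n => t)) = (t : ℂ) • (1 : Matrix (Fin n) (Fin n) ℂ) := by
    ext i j
    simp only [Matrix.diagonal_apply, Function.comp_apply, Matrix.smul_apply, Matrix.one_apply,
      smul_eq_mul, mul_ite, mul_one, mul_zero]
    split <;> simp
  rw [Md, this, Matrix.mul_smul, Matrix.smul_mul, mul_one,
    Unitary.mul_star_self_of_mem (SetLike.coe_mem U)]

lemma Md_posSemidef (hd : ∀ i, 0 ≤ d i) : (Md U d).PosSemidef := by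
  have h0 : (0 : Fin n → ℂ) ≤ (RCLike.ofReal ∘ d) := fun i => by simpa using hd i
  have h1 : (diagonal (RCLike.ofReal ∘ d) : Matrix (Fin n) (Fin n) ℂ).PosSemidef :=
    PosSemidef.diagonal h0
  have := h1.mul_mul_conjTranspose_same (U : Matrix (Fin n) (Fin n) ℂ)
  rwa [← star_eq_conjTranspose] at this

lemma qf_Md (x : Fin n → ℂ) :
    qf (Md U d) x = ((∑ i, d i * Complex.normSq ((star (U : Matrix (Fin n) (Fin n) ℂ) *ᵥ x) i) : ℝ) : ℂ) := by
  set y := star (U : Matrix (Fin n) (Fin n) ℂ) *ᵥ x with hy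
  have hsy : star y = star x ᵥ* (U : Matrix (Fin n) (Fin n) ℂ) := by
    rw [hy, star_mulVec, star_eq_conjTranspose, conjTranspose_conjTranspose]
  rw [qf, Md, ← mulVec_mulVec, ← mulVec_mulVec, dotProduct_mulVec, ← hsy, ← hy]
  simp only [dotProduct, mulVec_diagonal, Function.comp_apply, Pi.star_apply]
  push_cast
  refine Finset.sum_congr rfl fun i _ => ?_
  rw [show star (y i) * (RCLike.ofReal (d i) * y i)
        = RCLike.ofReal (d i) * (y i * star (y i)) by ring,
    RCLike.star_def, Complex.mul_conj]
  rfl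


lemma mfun_Md (f : ℝ → ℝ) : mfun f (Md U d) = Md U (f ∘ d) := by
  rw [mfun, dif_pos (isHermitian_Md U d), ← Matrix.IsHermitian.cfc_eq, cfc_Md]

end SQ2

/-- the superquadratic Jensen inequality for the quadratic form of a
positive semidefinite matrix. -/
theorem superquadratic_matrix_jensen {n : ℕ} (f : ℝ → ℝ) (hf : Superquadratic f)
    (A : Matrix (Fin n) (Fin n) ℂ) (hA : A.PosSemidef)
    (x : Fin n → ℂ) (hx : star x ⬝ᵥ x = 1) :
    f ((qf A x).re) ≤
      (qf (mfun f A) x).re - (qf (mfun f (matAbs (A - qf A x • 1))) x).re := by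
  classical
  have hH : A.IsHermitian := hA.1
  set U : unitary (Matrix (Fin n) (Fin n) ℂ) := hH.eigenvectorUnitary with hU
  set lam : Fin n → ℝ := hH.eigenvalues with hlam
  have hAeq : A = SQ.Md U lam := by rw [SQ.Md]; exact hH.spectral_theorem
  set y : Fin n → ℂ := star (U : Matrix (Fin n) (Fin n) ℂ) *ᵥ x with hy
  set w : Fin n → ℝ := fun i => Complex.normSq (y i) with hw
  have hw0 : ∀ i, 0 ≤ w i := fun i => Complex.normSq_nonneg _
  have hw1 : ∑ i, w i = 1 := by
    have h1 : qf (SQ.Md U (fun _ => (1:ℝ))) x = ((∑ i, (1:ℝ) * w i : ℝ) : ℂ) :=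
      SQ2.qf_Md U _ x
    rw [SQ2.Md_const U 1] at h1
    simp only [Complex.ofReal_one, one_smul, one_mul] at h1
    have h2 : qf (1 : Matrix (Fin n) (Fin n) ℂ) x = 1 := by
      rw [qf, Matrix.one_mulVec, hx]
    rw [h2] at h1
    exact_mod_cast h1.symm
  have hqf : qf A x = ((∑ i, lam i * w i : ℝ) : ℂ) := by
    rw [hAeq]; exact SQ2.qf_Md U lam x
  set t : ℝ := ∑ i, lam i * w i with htdef
  have ht : (qf A x).re = t := by rw [hqf]; simp
  have ht0 : 0 ≤ t := by
    rw [← ht]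
    exact hA.re_dotProduct_nonneg x
  set g : Fin n → ℝ := fun i => |lam i - t| with hg
  have hsub : A - qf A x • 1 = SQ.Md U (fun i => lam i - t) := by
    rw [show qf A x = (t : ℂ) by rw [hqf], hAeq, ← SQ2.Md_const U t, SQ2.Md_sub]
    rfl
  have habs : matAbs (A - qf A x • 1) = SQ.Md U g := by
    rw [hsub]
    have hB := (Matrix.posSemidef_conjTranspose_mul_self (SQ.Md U (fun i => lam i - t))).1
    have e1 : matAbs (SQ.Md U (fun i => lam i - t))
        = SQ.Md hB.eigenvectorUnitary (Real.sqrt ∘ hB.eigenvalues) := rfl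
    have e2 : SQ.Md hB.eigenvectorUnitary hB.eigenvalues
        = (SQ.Md U (fun i => lam i - t))ᴴ * SQ.Md U (fun i => lam i - t) := by
      rw [SQ.Md]; exact hB.spectral_theorem.symm
    rw [e1, ← SQ.cfc_Md, e2, SQ.isHermitian_Md U (fun i => lam i - t), SQ2.Md_mul', SQ.cfc_Md]
    congr 1
    funext i
    exact Real.sqrt_mul_self_eq_abs _
  have hmfA : mfun f A = SQ.Md U (f ∘ lam) := by rw [hAeq, SQ2.mfun_Md]
  have hmfAbs : mfun f (matAbs (A - qf A x • 1)) = SQ.Md U (f ∘ g) := by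
    rw [habs, SQ2.mfun_Md]
  have hre1 : (qf (mfun f A) x).re = ∑ i, f (lam i) * w i := by
    rw [hmfA, SQ2.qf_Md]; simp [Function.comp]; rfl
  have hre2 : (qf (mfun f (matAbs (A - qf A x • 1))) x).re = ∑ i, f (g i) * w i := by
    rw [hmfAbs, SQ2.qf_Md]; simp [Function.comp]; rfl
  obtain ⟨C, hC⟩ := hf t ht0
  have hlam0 : ∀ i, 0 ≤ lam i := fun i => hA.eigenvalues_nonneg i
  have hsum : ∑ i, (f t + C * (lam i - t) + f (g i)) * w i ≤ ∑ i, f (lam i) * w i :=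
    Finset.sum_le_sum fun i _ =>
      mul_le_mul_of_nonneg_right (hC (lam i) (hlam0 i)) (hw0 i)
  have hexp : ∑ i, (f t + C * (lam i - t) + f (g i)) * w i
      = f t * (∑ i, w i) + C * ((∑ i, lam i * w i) - t * ∑ i, w i) + ∑ i, f (g i) * w i := by
    have e : ∀ i, (f t + C * (lam i - t) + f (g i)) * w i
        = f t * w i + C * (lam i * w i - t * w i) + f (g i) * w i := fun i => by ring
    simp only [e]
    rw [Finset.sum_add_distrib, Finset.sum_add_distrib, ← Finset.mul_sum, ← Finset.mul_sum,
      Finset.sum_sub_distrib, ← Finset.mul_sum]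
  rw [ht, hre1, hre2]
  rw [hexp, hw1, ← htdef] at hsum
  have : f t * 1 + C * (t - t * 1) + ∑ i, f (g i) * w i ≤ ∑ i, f (lam i) * w i := hsum
  linarith
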